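/- arXiv:1411.7457 — 2 statements merged into one kernel-verified Lean document; each statement's English description precedes it below -/
import Mathlib

section
/- Let K be an n×n Hermitian complex matrix. Then trace(K²) is a nonnegative real number and |det(I + iK)|² ≥ 1 + trace(K²). -/
/-!
Diagonalise `K = U D U*` with `U` unitary and `D = diag(λ)` real. Conjugation by `U` preserves
trace and determinant, so `tr K² = ∑ λᵢ²` and `det (1 + iK) = ∏ (1 + iλᵢ)`, whence
`|det (1 + iK)|² = ∏ (1 + λᵢ²) ≥ 1 + ∑ λᵢ²` by expanding the product.
-/

open Matrix Finset

theorem Finset.one_add_sum_le_prod_one_add {ι R : Type*} [CommSemiring R] [PartialOrder R]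
    [IsOrderedRing R] (s : Finset ι) {f : ι → R} (hf : ∀ i ∈ s, 0 ≤ f i) :
    1 + ∑ i ∈ s, f i ≤ ∏ i ∈ s, (1 + f i) := by
  classical
  induction s using Finset.induction with
  | empty => simp
  | @insert a s ha ih =>
    rw [sum_insert ha, prod_insert ha]
    have hfa : 0 ≤ f a := hf a (mem_insert_self a s)
    have hsum : 0 ≤ ∑ i ∈ s, f i := sum_nonneg fun i hi ↦ hf i (mem_insert_of_mem hi)
    calc 1 + (f a + ∑ i ∈ s, f i)
        ≤ 1 + (f a + ∑ i ∈ s, f i) + f a * ∑ i ∈ s, f i :=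
          le_add_of_nonneg_right (mul_nonneg hfa hsum)
      _ = (1 + f a) * (1 + ∑ i ∈ s, f i) := by ring
      _ ≤ (1 + f a) * ∏ i ∈ s, (1 + f i) :=
          mul_le_mul_of_nonneg_left (ih fun i hi ↦ hf i (mem_insert_of_mem hi))
            (add_nonneg zero_le_one hfa)

namespace Matrix
variable {n R : Type*} [Fintype n] [DecidableEq n] [CommRing R] [StarRing R]

theorem det_conjStarAlgAut (u : unitary (Matrix n n R)) (X : Matrix n n R) :
    (Unitary.conjStarAlgAut R _ u X).det = X.det :=
  det_conj_of_mul_eq_one (Unitary.coe_mul_star_self u) (Unitary.coe_star_mul_self u)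

theorem trace_conjStarAlgAut (u : unitary (Matrix n n R)) (X : Matrix n n R) :
    (Unitary.conjStarAlgAut R _ u X).trace = X.trace := by
  rw [Unitary.conjStarAlgAut_apply, trace_mul_cycle, Unitary.coe_star_mul_self, one_mul]

namespace IsHermitian

theorem trace_pow {𝕜 : Type*} [RCLike 𝕜] {A : Matrix n n 𝕜} (hA : A.IsHermitian) (k : ℕ) :
    (A ^ k).trace = ∑ i, (hA.eigenvalues i : 𝕜) ^ k := by
  conv_lhs => rw [hA.spectral_theorem, ← map_pow, trace_conjStarAlgAut, diagonal_pow,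
    trace_diagonal]
  rfl

theorem det_one_add_I_smul {A : Matrix n n ℂ} (hA : A.IsHermitian) :
    (1 + Complex.I • A).det = ∏ i, (1 + Complex.I * hA.eigenvalues i) := by
  conv_lhs =>
    rw [hA.spectral_theorem, ← map_one (Unitary.conjStarAlgAut ℂ _ hA.eigenvectorUnitary),
      ← map_smul, ← map_add, det_conjStarAlgAut, ← diagonal_one, ← diagonal_smul, diagonal_add,
      det_diagonal]
  rfl

end IsHermitian
end Matrix

theorem Complex.norm_one_add_I_mul_sq (x : ℝ) : ‖1 + Complex.I * x‖ ^ 2 = 1 + x ^ 2 := by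
  rw [Complex.sq_norm, mul_comm, ← Complex.ofReal_one, Complex.normSq_add_mul_I, one_pow]

theorem stmt_12 (n : ℕ) (K : Matrix (Fin n) (Fin n) ℂ) (hK : K.IsHermitian) :
    ((K ^ 2).trace).im = 0 ∧ 0 ≤ ((K ^ 2).trace).re ∧
    ‖(1 + Complex.I • K).det‖ ^ 2 ≥ 1 + ((K ^ 2).trace).re := by
  have htrace : (K ^ 2).trace = ((∑ i, hK.eigenvalues i ^ 2 : ℝ) : ℂ) := by
    push_cast
    exact hK.trace_pow 2
  have hdet : ‖(1 + Complex.I • K).det‖ ^ 2 = ∏ i, (1 + hK.eigenvalues i ^ 2) := by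
    simp only [hK.det_one_add_I_smul, norm_prod, ← prod_pow, Complex.norm_one_add_I_mul_sq]
  rw [htrace, Complex.ofReal_im, Complex.ofReal_re, hdet]
  exact ⟨rfl, by positivity, one_add_sum_le_prod_one_add _ fun i _ ↦ sq_nonneg _⟩
end

section
/- Let A and B be n×n Hermitian positive semidefinite complex matrices and t ∈ [0,1], and let C := (1−t)·A + t·B (which is Hermitian positive semidefinite). Then ∑_{j=1}^n arctan( λ_j(C) ) ≥ (1−t) · ∑_{j=1}^n arctan( λ_j(A) ) + t · ∑_{j=1}^n arctan( λ_j(B) ), where λ_1(M), …, λ_n(M) denote the real eigenvalues (with multiplicity) of a Hermitian matrix M given by the spectral theorem. -/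
/-!
Peierls' inequality: if `f` is concave on `s` and the eigenvalues `λ` of a Hermitian `A` lie in
`s`, then `∑ f (λ i) ≤ ∑ f ((V⋆ A V) j j)` for every unitary `V`, since the diagonal entries of
`V⋆ A V` are averages of the eigenvalues with the doubly stochastic weights `|(U⋆ V) k j|²`,
`U` diagonalising `A`. Choosing `V` to diagonalise `C = a A + b B` writes each eigenvalue of `C` as
`a (V⋆ A V) j j + b (V⋆ B V) j j`, and concavity of `f` at these points does the rest. Apply this
to `arctan`, which is concave on `[0, ∞)`.
-/
open scoped ComplexOrder
open Matrix

theorem Real.concaveOn_arctan_Ici : ConcaveOn ℝ (Set.Ici 0) Real.arctan := by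
  refine AntitoneOn.concaveOn_of_deriv (convex_Ici 0) Real.continuous_arctan.continuousOn
    Real.differentiable_arctan.differentiableOn ?_
  rw [interior_Ici, Real.deriv_arctan]
  intro x (hx : 0 < x) y _ hxy
  have : 0 ≤ x := hx.le
  dsimp only
  gcongr

section

variable {n : Type*} [Fintype n] [DecidableEq n]

theorem Matrix.norm_sq_mem_doublyStochastic_of_mem_unitaryGroup {𝕜 : Type*} [RCLike 𝕜]
    {U : Matrix n n 𝕜} (hU : U ∈ unitaryGroup n 𝕜) :
    of (fun i j => ‖U i j‖ ^ 2) ∈ doublyStochastic ℝ n := by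
  refine mem_doublyStochastic_iff_sum.2 ⟨fun i j => sq_nonneg _, fun i => ?_, fun j => ?_⟩
  · have h := congrFun (congrFun (mem_unitaryGroup_iff.1 hU) i) i
    simp only [mul_apply, star_apply, RCLike.star_def, RCLike.mul_conj, one_apply_eq] at h
    exact_mod_cast h
  · have h := congrFun (congrFun (mem_unitaryGroup_iff'.1 hU) j) j
    simp only [mul_apply, star_apply, RCLike.star_def, RCLike.conj_mul, one_apply_eq] at h
    exact_mod_cast h

theorem Convex.vecMul_mem_of_mem_doublyStochastic {s : Set ℝ} (hs : Convex ℝ s)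
    {P : Matrix n n ℝ} (hP : P ∈ doublyStochastic ℝ n) {x : n → ℝ} (hx : ∀ i, x i ∈ s) (j : n) :
    (x ᵥ* P) j ∈ s := by
  simpa [vecMul, dotProduct, mul_comm] using
    hs.sum_mem (fun i _ => nonneg_of_mem_doublyStochastic hP) (sum_col_of_mem_doublyStochastic hP j)
      (fun i _ => hx i)

theorem ConcaveOn.sum_le_sum_vecMul_of_mem_doublyStochastic {s : Set ℝ} {f : ℝ → ℝ}
    (hf : ConcaveOn ℝ s f) {P : Matrix n n ℝ} (hP : P ∈ doublyStochastic ℝ n) {x : n → ℝ}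
    (hx : ∀ i, x i ∈ s) :
    ∑ i, f (x i) ≤ ∑ j, f ((x ᵥ* P) j) :=
  calc ∑ i, f (x i) = ∑ j, ∑ i, P i j * f (x i) := by
        rw [Finset.sum_comm]
        simp [← Finset.sum_mul, sum_row_of_mem_doublyStochastic hP]
    _ ≤ ∑ j, f ((x ᵥ* P) j) := Finset.sum_le_sum fun j _ => by
        simpa [vecMul, dotProduct, mul_comm] using
          hf.le_map_sum (fun i _ => nonneg_of_mem_doublyStochastic hP)
            (sum_col_of_mem_doublyStochastic hP j) (fun i _ => hx i)

variable {𝕜 : Type*} [RCLike 𝕜]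

namespace Matrix.IsHermitian

variable {A : Matrix n n 𝕜}

theorem re_conj_diag_eq_vecMul (hA : A.IsHermitian) (V : Matrix n n 𝕜) (j : n) :
    RCLike.re ((star V * A * V) j j) =
      (hA.eigenvalues ᵥ*
        of fun k j => ‖(star (hA.eigenvectorUnitary : Matrix n n 𝕜) * V) k j‖ ^ 2) j := by
  set W := star (hA.eigenvectorUnitary : Matrix n n 𝕜) * V
  have hconj : star V * A * V = star W * diagonal (RCLike.ofReal ∘ hA.eigenvalues) * W := by
    conv_lhs => rw [hA.spectral_theorem, Unitary.conjStarAlgAut_apply]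
    simp only [W, star_mul, star_star, Matrix.mul_assoc]
  rw [hconj, Matrix.mul_assoc, mul_apply, map_sum]
  refine Finset.sum_congr rfl fun k _ => ?_
  rw [diagonal_mul, star_apply, RCLike.star_def, Function.comp_apply, mul_left_comm,
    RCLike.conj_mul, ← RCLike.ofReal_pow, ← RCLike.ofReal_mul, RCLike.ofReal_re]
  rfl

theorem eigenvalues_eq_re_conj_diag (hA : A.IsHermitian) (j : n) :
    hA.eigenvalues j = RCLike.re
      ((star (hA.eigenvectorUnitary : Matrix n n 𝕜) * A * hA.eigenvectorUnitary) j j) := by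
  rw [← Unitary.conjStarAlgAut_star_apply (S := 𝕜), hA.conjStarAlgAut_star_eigenvectorUnitary]
  simp

variable {s : Set ℝ} {f : ℝ → ℝ} {V : Matrix n n 𝕜}

theorem re_conj_diag_mem_of_convex (hA : A.IsHermitian) (hs : Convex ℝ s)
    (hAs : ∀ i, hA.eigenvalues i ∈ s) (hV : V ∈ unitaryGroup n 𝕜) (j : n) :
    RCLike.re ((star V * A * V) j j) ∈ s := by
  rw [hA.re_conj_diag_eq_vecMul]
  exact hs.vecMul_mem_of_mem_doublyStochastic
    (norm_sq_mem_doublyStochastic_of_mem_unitaryGroup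
      (mul_mem (Unitary.star_mem hA.eigenvectorUnitary.prop) hV)) hAs j

theorem sum_comp_eigenvalues_le_of_concaveOn (hA : A.IsHermitian) (hf : ConcaveOn ℝ s f)
    (hAs : ∀ i, hA.eigenvalues i ∈ s) (hV : V ∈ unitaryGroup n 𝕜) :
    ∑ i, f (hA.eigenvalues i) ≤ ∑ j, f (RCLike.re ((star V * A * V) j j)) := by
  simp only [hA.re_conj_diag_eq_vecMul]
  exact hf.sum_le_sum_vecMul_of_mem_doublyStochastic
    (norm_sq_mem_doublyStochastic_of_mem_unitaryGroup
      (mul_mem (Unitary.star_mem hA.eigenvectorUnitary.prop) hV)) hAs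

end Matrix.IsHermitian

theorem ConcaveOn.mul_sum_comp_eigenvalues_add_mul_le {s : Set ℝ} {f : ℝ → ℝ}
    (hf : ConcaveOn ℝ s f) {A B : Matrix n n 𝕜} (hA : A.IsHermitian) (hB : B.IsHermitian)
    (hAs : ∀ i, hA.eigenvalues i ∈ s) (hBs : ∀ i, hB.eigenvalues i ∈ s) {a b : ℝ} (ha : 0 ≤ a)
    (hb : 0 ≤ b) (hab : a + b = 1) (hC : (a • A + b • B).IsHermitian) :
    a * ∑ i, f (hA.eigenvalues i) + b * ∑ i, f (hB.eigenvalues i) ≤ ∑ i, f (hC.eigenvalues i) := by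
  set V : Matrix n n 𝕜 := (hC.eigenvectorUnitary : Matrix n n 𝕜)
  have hV : V ∈ unitaryGroup n 𝕜 := hC.eigenvectorUnitary.prop
  set x := fun j => RCLike.re ((star V * A * V) j j)
  set y := fun j => RCLike.re ((star V * B * V) j j)
  have hC_diag : ∀ j, hC.eigenvalues j = a * x j + b * y j := fun j => by
    simp [hC.eigenvalues_eq_re_conj_diag j, x, y, V, Matrix.mul_add, Matrix.add_mul, RCLike.smul_re]
  calc a * ∑ i, f (hA.eigenvalues i) + b * ∑ i, f (hB.eigenvalues i)
      ≤ a * ∑ j, f (x j) + b * ∑ j, f (y j) :=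
      add_le_add
        (mul_le_mul_of_nonneg_left (hA.sum_comp_eigenvalues_le_of_concaveOn hf hAs hV) ha)
        (mul_le_mul_of_nonneg_left (hB.sum_comp_eigenvalues_le_of_concaveOn hf hBs hV) hb)
    _ = ∑ j, (a * f (x j) + b * f (y j)) := by
        rw [Finset.sum_add_distrib, Finset.mul_sum, Finset.mul_sum]
    _ ≤ ∑ j, f (hC.eigenvalues j) := Finset.sum_le_sum fun j _ => by
        simpa [hC_diag j] using
          hf.2 (hA.re_conj_diag_mem_of_convex hf.1 hAs hV j)
            (hB.re_conj_diag_mem_of_convex hf.1 hBs hV j) ha hb hab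

end

theorem stmt_14 (n : ℕ) (A B : Matrix (Fin n) (Fin n) ℂ)
    (hA : A.PosSemidef) (hB : B.PosSemidef) (t : ℝ) (ht₀ : 0 ≤ t) (ht₁ : t ≤ 1) :
    ∃ hC : ((1 - t) • A + t • B).PosSemidef,
      ∑ j : Fin n, Real.arctan (hC.isHermitian.eigenvalues j) ≥
        (1 - t) * ∑ j : Fin n, Real.arctan (hA.isHermitian.eigenvalues j) +
          t * ∑ j : Fin n, Real.arctan (hB.isHermitian.eigenvalues j) := by
  have hC : ((1 - t) • A + t • B).PosSemidef :=
    (hA.smul (sub_nonneg.2 ht₁)).add (hB.smul ht₀)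
  exact ⟨hC, Real.concaveOn_arctan_Ici.mul_sum_comp_eigenvalues_add_mul_le hA.isHermitian
    hB.isHermitian hA.eigenvalues_nonneg hB.eigenvalues_nonneg (sub_nonneg.2 ht₁) ht₀
    (sub_add_cancel 1 t) hC.isHermitian⟩
end
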